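/- Monotonicity of effective resistance under passing to subgraphs (Rayleigh's principle): if Γ' = (G',E') is a subgraph of Γ = (G,E), and A' = A ∩ G', B' = B ∩ G' are nonempty, then the effective resistance in Γ' satisfies R'_eff(A',B') ≥ R_eff(A,B). -/
import Mathlib


open scoped ENNReal

attribute [local instance] Classical.propDecidable

variable {V : Type*}

/-- Dirichlet energy (with values in `ℝ≥0∞`) of a function on the vertices of a graph,
with unit resistors on the edges: `E(f,f) = (1/2) ∑_{x∼y} (f x - f y)^2`. -/
noncomputable def eEnergy (G : SimpleGraph V) (f : V → ℝ) : ℝ≥0∞ :=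
  2⁻¹ * ∑' e : {p : V × V // G.Adj p.1 p.2}, ENNReal.ofReal ((f e.val.1 - f e.val.2) ^ 2)

/-- Effective resistance between two sets of vertices, defined variationally:
`Reff(A,B)⁻¹ = inf { E(f,f) : f|_A = 1, f|_B = 0 }`. -/
noncomputable def effRes (G : SimpleGraph V) (A B : Set V) : ℝ≥0∞ :=
  (⨅ f ∈ {f : V → ℝ | (∀ a ∈ A, f a = 1) ∧ (∀ b ∈ B, f b = 0)}, eEnergy G f)⁻¹

/-- Rayleigh's monotonicity principle: if `Γ' = (G',E')` is a subgraph of `Γ`,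
and `A' = A ∩ G'`, `B' = B ∩ G'` are nonempty, then the effective resistance computed in the
subgraph satisfies `R'_eff(A',B') ≥ R_eff(A,B)`. -/
theorem effRes_subgraph (G : SimpleGraph V) [Infinite V]
    (hconn : G.Connected) (hlf : ∀ v : V, (G.neighborSet v).Finite)
    (H : G.Subgraph) (A B : Set V)
    (hA' : (Subtype.val ⁻¹' A : Set H.verts).Nonempty)
    (hB' : (Subtype.val ⁻¹' B : Set H.verts).Nonempty) :
    effRes G A B ≤ effRes H.coe (Subtype.val ⁻¹' A) (Subtype.val ⁻¹' B) := by
  unfold effRes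
  rw [ENNReal.inv_le_inv]
  -- suffices: inf over subgraph ≤ inf over G
  refine le_iInf₂ fun f hf => ?_
  have hf' : (fun x : H.verts => f x.val) ∈
      {g : H.verts → ℝ | (∀ a ∈ (Subtype.val ⁻¹' A : Set H.verts), g a = 1) ∧
        (∀ b ∈ (Subtype.val ⁻¹' B : Set H.verts), g b = 0)} :=
    ⟨fun a ha => hf.1 a.val ha, fun b hb => hf.2 b.val hb⟩
  refine le_trans (iInf₂_le _ hf') ?_
  unfold eEnergy
  refine mul_le_mul_right ?_ _
  have hinj : Function.Injective
      (fun e : {p : H.verts × H.verts // H.coe.Adj p.1 p.2} =>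
        (⟨(e.val.1.val, e.val.2.val), H.adj_sub e.prop⟩ :
          {p : V × V // G.Adj p.1 p.2})) := by
    rintro ⟨⟨⟨u, hu⟩, ⟨v, hv⟩⟩, h⟩ ⟨⟨⟨u', hu'⟩, ⟨v', hv'⟩⟩, h'⟩ heq
    simp only [Subtype.mk.injEq, Prod.mk.injEq] at heq ⊢
    exact heq
  exact ENNReal.tsum_comp_le_tsum_of_injective hinj
    (fun e => ENNReal.ofReal ((f e.val.1 - f e.val.2) ^ 2))
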